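/- arXiv:2208.00088 — 2 statements merged into one kernel-verified Lean document; each statement's English description precedes it below -/
import Mathlib

section
/- Let E be a real inner product space and let l_1, ..., l_T : E → ℝ be differentiable, with each l_i being μ_i-strongly convex for some μ_i ≥ 0. Let σ_1, ..., σ_T ≥ 0 with Σ_{i=1}^{t}(σ_i + μ_i) > 0 for each t, and suppose the iterates satisfy the FTRL updates: for each t, w_t is a global minimizer (with vanishing gradient) of F_t(w) := Σ_{i=1}^{t-1} l_i(w) + Σ_{i=1}^{t-1} (σ_i/2)‖w − w_i‖², and w_{T+1} is a global minimizer of F_{T+1}. Suppose moreover that all iterates w_1, ..., w_T and the comparator w* lie in a set W of diameter D (i.e., ‖u − v‖ ≤ D for all u, v ∈ W). Then the regret satisfies R(T) = Σ_{t=1}^{T} [l_t(w_t) − l_t(w*)] ≤ Σ_{t=1}^{T} ‖∇l_t(w_t)‖² / (2 Σ_{i=1}^{t} (σ_i + μ_i)) + (D²/2) Σ_{t=1}^{T} σ_t. -/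
open Finset
open scoped Gradient RealInnerProductSpace

/-!
Write `r_t x = σ_t / 2 * ‖x - w_t‖ ^ 2`, so that `F_{t+1} = F_t + l_t + r_t` and `r_t (w_t) = 0`.
Then `∑ l_t (w_t) = ∑ (F_{t+1} (w_t) - F_{t+1} (w_{t+1})) + F_{T+1} (w_{T+1})` telescopes, and
`F_{T+1} (w_{T+1}) ≤ F_{T+1} (w*)` bounds the regret by the gaps `F_{t+1} (w_t) - F_{t+1} (w_{t+1})`
plus `∑ r_t (w*) ≤ D² / 2 * ∑ σ_t`. For a gap, `F_{t+1}` is `λ_t = ∑_{i ≤ t} (σ_i + μ_i)`-strongly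
convex and, as `∇ F_t (w_t) = 0`, its gradient at `w_t` is `∇ l_t (w_t)`; completing the square in
the first-order bound `f y ≥ f x + ⟪∇ f x, y - x⟫ + λ / 2 * ‖y - x‖ ^ 2` gives
`f x - f y ≤ ‖∇ f x‖ ^ 2 / (2 * λ)`.
-/

theorem ftrl_objective_succ {α : Type*} {F f : ℕ → α → ℝ}
    (hF : ∀ t x, F t x = ∑ i ∈ Finset.Icc 1 (t - 1), f i x) {t : ℕ} (ht : 1 ≤ t) (x : α) :
    F (t + 1) x = F t x + f t x := by
  obtain ⟨s, rfl⟩ : ∃ s, t = s + 1 := ⟨t - 1, by omega⟩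
  rw [hF, hF, Nat.add_sub_cancel, Nat.add_sub_cancel, sum_Icc_succ_top (by omega)]

theorem ftrl_regret_le_sum_gap_add_sum_reg {α : Type*} (T : ℕ) (l r F : ℕ → α → ℝ) (w : ℕ → α)
    (u : α)
    (hF : ∀ t x, F t x = ∑ i ∈ Finset.Icc 1 (t - 1), (l i x + r i x))
    (hr : ∀ t ∈ Finset.Icc 1 T, r t (w t) = 0)
    (hmin : F (T + 1) (w (T + 1)) ≤ F (T + 1) u) :
    ∑ t ∈ Finset.Icc 1 T, (l t (w t) - l t u)
      ≤ ∑ t ∈ Finset.Icc 1 T, (F (t + 1) (w t) - F (t + 1) (w (t + 1)))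
        + ∑ t ∈ Finset.Icc 1 T, r t u := by
  have hloss : ∀ n ≤ T, ∑ t ∈ Finset.Icc 1 n, l t (w t)
      = ∑ t ∈ Finset.Icc 1 n, (F (t + 1) (w t) - F (t + 1) (w (t + 1)))
        + F (n + 1) (w (n + 1)) := by
    intro n hn
    induction n with
    | zero => simp [hF]
    | succ n ih =>
      rw [sum_Icc_succ_top (by omega), sum_Icc_succ_top (by omega), ih (by omega),
        ftrl_objective_succ hF (t := n + 1) (by omega), hr (n + 1) (by simp; omega)]
      ring
  have hu : F (T + 1) u = ∑ t ∈ Finset.Icc 1 T, l t u + ∑ t ∈ Finset.Icc 1 T, r t u := by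
    rw [hF, Nat.add_sub_cancel, sum_add_distrib]
  rw [sum_sub_distrib, hloss T le_rfl]
  linarith

section NormedSpace

variable {E : Type*} [NormedAddCommGroup E] [NormedSpace ℝ E]

theorem ConvexOn.add_fderiv_sub_le {f : E → ℝ} {f' : E →L[ℝ] ℝ} {x : E}
    (hf : ConvexOn ℝ Set.univ f) (hx : HasFDerivAt f f' x) (y : E) : f x + f' (y - x) ≤ f y := by
  let L : ℝ →ᵃ[ℝ] E := AffineMap.lineMap x y
  have hline : ConvexOn ℝ Set.univ (f ∘ L) := by simpa using hf.comp_affineMap L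
  have hderiv : HasDerivAt (f ∘ L) (f' (y - x)) 0 :=
    (by simpa [L] using hx : HasFDerivAt f f' (L 0)).comp_hasDerivAt 0
      AffineMap.hasDerivAt_lineMap
  have := hline.le_slope_of_hasDerivAt (Set.mem_univ 0) (Set.mem_univ 1) one_pos hderiv
  simp only [slope_def_field, Function.comp_apply, AffineMap.lineMap_apply_one,
    AffineMap.lineMap_apply_zero, sub_zero, div_one, L] at this
  linarith

theorem StrongConvexOn.add {s : Set E} {f g : E → ℝ} {m n : ℝ} (hf : StrongConvexOn s m f)
    (hg : StrongConvexOn s n g) : StrongConvexOn s (m + n) (f + g) := by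
  unfold StrongConvexOn
  convert UniformConvexOn.add hf hg using 1
  funext r
  simp only [Pi.add_apply]
  ring

theorem strongConvexOn_sum {ι : Type*} {s : Set E} {t : Finset ι} {m : ι → ℝ} {f : ι → E → ℝ}
    (hs : Convex ℝ s) (h : ∀ i ∈ t, StrongConvexOn s (m i) (f i)) :
    StrongConvexOn s (∑ i ∈ t, m i) (∑ i ∈ t, f i) := by
  classical
  induction t using Finset.induction_on with
  | empty => exact strongConvexOn_zero.mpr (convexOn_const 0 hs)
  | insert i t hi ih =>
    rw [sum_insert hi, sum_insert hi]
    exact (h i (mem_insert_self i t)).add (ih fun j hj => h j (mem_insert_of_mem hj))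

end NormedSpace

section InnerProductSpace

variable {E : Type*} [NormedAddCommGroup E] [InnerProductSpace ℝ E]

theorem strongConvexOn_mul_sq_norm_sub (c : ℝ) (v : E) :
    StrongConvexOn Set.univ c (fun x => c / 2 * ‖x - v‖ ^ 2) := by
  rw [strongConvexOn_iff_convex]
  have hq : (fun x => c / 2 * ‖x - v‖ ^ 2 - c / 2 * ‖x‖ ^ 2)
      = fun x => (-c) • innerSL ℝ v x + c / 2 * ‖v‖ ^ 2 := by
    funext x
    rw [norm_sub_sq_real, innerSL_apply_apply, real_inner_comm, smul_eq_mul]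
    ring
  rw [hq]
  exact ((((-c) • innerSL ℝ v : E →L[ℝ] ℝ) : E →ₗ[ℝ] ℝ).convexOn convex_univ).add_const _

theorem StrongConvexOn.add_fderiv_sub_add_le {f : E → ℝ} {m : ℝ} {f' : E →L[ℝ] ℝ} {x : E}
    (hf : StrongConvexOn Set.univ m f) (hx : HasFDerivAt f f' x) (y : E) :
    f x + f' (y - x) + m / 2 * ‖y - x‖ ^ 2 ≤ f y := by
  have hq := (hasStrictFDerivAt_norm_sq x).hasFDerivAt.const_mul (m / 2)
  have h := (strongConvexOn_iff_convex.mp hf).add_fderiv_sub_le (hx.sub hq) y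
  have hy : ‖y‖ ^ 2 = ‖x‖ ^ 2 + 2 * ⟪x, y - x⟫ + ‖y - x‖ ^ 2 := by
    simpa using norm_add_sq_real x (y - x)
  simp only [sub_apply, smul_apply, coe_innerSL_apply, nsmul_eq_mul, Nat.cast_ofNat,
    smul_eq_mul] at h
  rw [hy] at h
  linarith

theorem StrongConvexOn.sub_le_norm_sq_div_of_hasGradientAt [CompleteSpace E] {f : E → ℝ} {m : ℝ}
    {g x : E} (hf : StrongConvexOn Set.univ m f) (hm : 0 < m) (hx : HasGradientAt f g x)
    (y : E) : f x - f y ≤ ‖g‖ ^ 2 / (2 * m) := by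
  have h := hf.add_fderiv_sub_add_le (hasGradientAt_iff_hasFDerivAt.mp hx) y
  rw [InnerProductSpace.toDual_apply_apply] at h
  have hsq : 0 ≤ ‖g + m • (y - x)‖ ^ 2 := sq_nonneg _
  rw [norm_add_sq_real, real_inner_smul_right, norm_smul, mul_pow, Real.norm_eq_abs,
    sq_abs] at hsq
  rw [le_div_iff₀ (by positivity)]
  nlinarith [mul_le_mul_of_nonneg_left h hm.le]

theorem ftrl_step_gap_le [CompleteSpace E] {l : ℕ → E → ℝ} {μ σ : ℕ → ℝ} {w : ℕ → E}
    {F : ℕ → E → ℝ} {t : ℕ} (ht : 1 ≤ t)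
    (hl : ∀ i ∈ Finset.Icc 1 t, Differentiable ℝ (l i))
    (hsc : ∀ i ∈ Finset.Icc 1 t, StrongConvexOn Set.univ (μ i) (l i))
    (hpos : 0 < ∑ i ∈ Finset.Icc 1 t, (σ i + μ i))
    (hF : ∀ t x, F t x = ∑ i ∈ Finset.Icc 1 (t - 1), (l i x + σ i / 2 * ‖x - w i‖ ^ 2))
    (hstat : ∇ (F t) (w t) = 0) :
    F (t + 1) (w t) - F (t + 1) (w (t + 1))
      ≤ ‖∇ (l t) (w t)‖ ^ 2 / (2 * ∑ i ∈ Finset.Icc 1 t, (σ i + μ i)) := by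
  have hconv : StrongConvexOn Set.univ (∑ i ∈ Finset.Icc 1 t, (σ i + μ i)) (F (t + 1)) := by
    convert strongConvexOn_sum convex_univ fun i hi =>
      (strongConvexOn_mul_sq_norm_sub (σ i) (w i)).add (hsc i hi) using 1
    funext x
    rw [hF, Nat.add_sub_cancel, Finset.sum_apply]
    exact sum_congr rfl fun i _ => add_comm _ _
  have hFt : HasFDerivAt (F t) (0 : E →L[ℝ] ℝ) (w t) := by
    have hd : DifferentiableAt ℝ (F t) (w t) := by
      rw [funext (hF t)]
      refine DifferentiableAt.fun_sum fun i hi => ?_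
      have hi' : i ∈ Finset.Icc 1 t := by simp only [mem_Icc] at hi ⊢; omega
      exact (hl i hi').differentiableAt.add
        (((differentiableAt_id.sub_const (w i)).norm_sq ℝ).const_mul _)
    simpa [hstat] using hasGradientAt_iff_hasFDerivAt.mp hd.hasGradientAt
  have hprox : HasFDerivAt (fun x => σ t / 2 * ‖x - w t‖ ^ 2) (0 : E →L[ℝ] ℝ) (w t) := by
    simpa using (((hasFDerivAt_id (w t)).sub_const (w t)).norm_sq).const_mul (σ t / 2)
  have hlt := (hl t (by simp; omega)).differentiableAt.hasFDerivAt (x := w t)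
  have hgrad : HasGradientAt (F (t + 1)) (∇ (l t) (w t)) (w t) := by
    rw [hasGradientAt_iff_hasFDerivAt, toDual_gradient, funext (ftrl_objective_succ hF ht)]
    simpa using hFt.fun_add (hlt.fun_add hprox)
  exact hconv.sub_le_norm_sq_div_of_hasGradientAt hpos hgrad _

end InnerProductSpace

theorem ftrl_regret_strongly_convex_general {E : Type*} [NormedAddCommGroup E] [InnerProductSpace ℝ E]
    [CompleteSpace E] (T : ℕ) (l : ℕ → E → ℝ) (μ σ : ℕ → ℝ) (w : ℕ → E)
    (wstar : E) (W : Set E) (D : ℝ)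
    (hl : ∀ i ∈ Finset.Icc 1 T, Differentiable ℝ (l i))
    (hsc : ∀ i ∈ Finset.Icc 1 T, ConvexOn ℝ Set.univ (fun x => l i x - μ i / 2 * ‖x‖ ^ 2))
    (hσ : ∀ i ∈ Finset.Icc 1 T, 0 ≤ σ i)
    (hpos : ∀ t ∈ Finset.Icc 1 T, 0 < ∑ i ∈ Finset.Icc 1 t, (σ i + μ i))
    (F : ℕ → E → ℝ)
    (hF : ∀ t x, F t x = (∑ i ∈ Finset.Icc 1 (t - 1), l i x)
      + ∑ i ∈ Finset.Icc 1 (t - 1), σ i / 2 * ‖x - w i‖ ^ 2)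
    (hmin : ∀ t ∈ Finset.Icc 1 T, (∀ x, F t (w t) ≤ F t x) ∧ ∇ (F t) (w t) = 0)
    (hminT : ∀ x, F (T + 1) (w (T + 1)) ≤ F (T + 1) x)
    (hW : ∀ t ∈ Finset.Icc 1 T, w t ∈ W) (hWs : wstar ∈ W)
    (hD : ∀ u ∈ W, ∀ v ∈ W, ‖u - v‖ ≤ D) :
    ∑ t ∈ Finset.Icc 1 T, (l t (w t) - l t wstar)
      ≤ (∑ t ∈ Finset.Icc 1 T, ‖∇ (l t) (w t)‖ ^ 2 / (2 * ∑ i ∈ Finset.Icc 1 t, (σ i + μ i)))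
        + D ^ 2 / 2 * ∑ t ∈ Finset.Icc 1 T, σ t := by
  have hF' : ∀ t x, F t x = ∑ i ∈ Finset.Icc 1 (t - 1), (l i x + σ i / 2 * ‖x - w i‖ ^ 2) :=
    fun t x => by rw [hF, sum_add_distrib]
  have hgap : ∀ t ∈ Finset.Icc 1 T, F (t + 1) (w t) - F (t + 1) (w (t + 1))
      ≤ ‖∇ (l t) (w t)‖ ^ 2 / (2 * ∑ i ∈ Finset.Icc 1 t, (σ i + μ i)) := by
    intro t ht
    have hIcc : Finset.Icc 1 t ⊆ Finset.Icc 1 T := Icc_subset_Icc le_rfl (mem_Icc.mp ht).2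
    exact ftrl_step_gap_le (mem_Icc.mp ht).1 (fun i hi => hl i (hIcc hi))
      (fun i hi => strongConvexOn_iff_convex.mpr (hsc i (hIcc hi))) (hpos t ht) hF' (hmin t ht).2
  have hreg : ∑ t ∈ Finset.Icc 1 T, σ t / 2 * ‖wstar - w t‖ ^ 2
      ≤ D ^ 2 / 2 * ∑ t ∈ Finset.Icc 1 T, σ t := by
    rw [mul_sum]
    refine sum_le_sum fun t ht => ?_
    have hdist : ‖wstar - w t‖ ^ 2 ≤ D ^ 2 :=
      pow_le_pow_left₀ (norm_nonneg _) (hD wstar hWs (w t) (hW t ht)) 2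
    nlinarith [hσ t ht]
  have hregret := ftrl_regret_le_sum_gap_add_sum_reg T l (fun i x => σ i / 2 * ‖x - w i‖ ^ 2) F w
    wstar hF' (fun t _ => by simp) (hminT wstar)
  linarith [sum_le_sum hgap]

/-- FTRL regret bound with quadratic proximal regularization and strongly-convex losses. -/
theorem ftrl_regret_strongly_convex {E : Type*} [NormedAddCommGroup E] [InnerProductSpace ℝ E]
    [CompleteSpace E] (T : ℕ) (l : ℕ → E → ℝ) (μ σ : ℕ → ℝ) (w : ℕ → E)
    (wstar : E) (W : Set E) (D : ℝ)
    (hl : ∀ i ∈ Finset.Icc 1 T, Differentiable ℝ (l i))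
    (hμ : ∀ i ∈ Finset.Icc 1 T, 0 ≤ μ i)
    (hsc : ∀ i ∈ Finset.Icc 1 T, ConvexOn ℝ Set.univ (fun x => l i x - μ i / 2 * ‖x‖ ^ 2))
    (hσ : ∀ i ∈ Finset.Icc 1 T, 0 ≤ σ i)
    (hpos : ∀ t ∈ Finset.Icc 1 T, 0 < ∑ i ∈ Finset.Icc 1 t, (σ i + μ i))
    (F : ℕ → E → ℝ)
    (hF : ∀ t x, F t x = (∑ i ∈ Finset.Icc 1 (t - 1), l i x)
      + ∑ i ∈ Finset.Icc 1 (t - 1), σ i / 2 * ‖x - w i‖ ^ 2)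
    (hmin : ∀ t ∈ Finset.Icc 1 T, (∀ x, F t (w t) ≤ F t x) ∧ ∇ (F t) (w t) = 0)
    (hminT : ∀ x, F (T + 1) (w (T + 1)) ≤ F (T + 1) x)
    (hW : ∀ t ∈ Finset.Icc 1 T, w t ∈ W) (hWs : wstar ∈ W)
    (hD : ∀ u ∈ W, ∀ v ∈ W, ‖u - v‖ ≤ D) :
    ∑ t ∈ Finset.Icc 1 T, (l t (w t) - l t wstar)
      ≤ (∑ t ∈ Finset.Icc 1 T, ‖∇ (l t) (w t)‖ ^ 2 / (2 * ∑ i ∈ Finset.Icc 1 t, (σ i + μ i)))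
        + D ^ 2 / 2 * ∑ t ∈ Finset.Icc 1 T, σ t :=
  ftrl_regret_strongly_convex_general T l μ σ w wstar W D hl hsc hσ hpos F hF hmin hminT hW hWs hD
end

section
/- Let E be a real inner product space and let l_1, ..., l_T : E → ℝ be differentiable, convex and L-smooth (gradient L-Lipschitz) with L > 0, and suppose each l_t attains a global minimum at some w*_t ∈ E. Let w* be a comparator, define ε_t² := l_t(w*) − l_t(w*_t) ≥ 0 and ℰ := √(Σ_{t=1}^{T} ε_t²), and assume ℰ > 0. Set the constant step-size η := min{1/ℰ, 1/(2L)}. Suppose the iterates satisfy the FTRL updates with constant regularization: for each t ≥ 2, w_t is a global minimizer (with vanishing gradient) of F_t(w) := Σ_{i=1}^{t-1} l_i(w) + (1/(2η))‖w − w_1‖², and suppose all iterates w_1, ..., w_T and w* lie in a set W of diameter D. Then R(T) = Σ_{t=1}^{T} [l_t(w_t) − l_t(w*)] ≤ 2D²L + (D² + 2L)·√(Σ_{t=1}^{T} ε_t²). -/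
open Finset
open scoped Gradient

/-!
Write `F_n(x) = ∑_{i ≤ n} l_i(x) + ‖x - w_1‖² / (2η)`, so that `w_{n+1}` minimizes `F_n`.
Since `F_n` is a convex function plus `‖· - w_1‖² / (2η)`, its minimizer satisfies the quadratic
growth bound `F_n(y) ≥ F_n(w_{n+1}) + ‖y - w_{n+1}‖² / (2η)`; adding the tangent-line bound for
`l_{n+1}` and completing the square gives
`F_n(w_{n+1}) + l_{n+1}(w_{n+1}) ≤ F_{n+1}(y) + (η/2) ‖∇l_{n+1}(w_{n+1})‖²` for every `y`.
Chaining these and taking `y = w*` yields the FTRL bound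
`R ≤ ‖w* - w_1‖² / (2η) + (η/2) ∑ ‖∇l_t(w_t)‖²`.
For an `L`-smooth loss `‖∇l_t(w_t)‖² ≤ 2L (l_t(w_t) - l_t(w*_t)) = 2L (l_t(w_t) - l_t(w*) + ε_t²)`,
so the regret bounds itself: `R ≤ D² / (2η) + ηL (R + ℰ²)`, and the choice of `η` gives
`ηL ≤ 1/2` and `η ℰ² ≤ ℰ`.
-/

open scoped RealInnerProductSpace

section FirstOrder

variable {F : Type*} [NormedAddCommGroup F] [NormedSpace ℝ F]

theorem ConvexOn.add_le_of_hasFDerivAt {f : F → ℝ} {f' : F →L[ℝ] ℝ} {x : F}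
    (hf : ConvexOn ℝ Set.univ f) (hf' : HasFDerivAt f f' x) (y : F) :
    f x + f' (y - x) ≤ f y := by
  have hline : ConvexOn ℝ Set.univ (f ∘ AffineMap.lineMap (k := ℝ) x y) := by
    simpa using hf.comp_affineMap (AffineMap.lineMap (k := ℝ) x y)
  have hderiv : HasDerivAt (f ∘ AffineMap.lineMap (k := ℝ) x y) (f' (y - x)) 0 :=
    (by simpa using hf' : HasFDerivAt f f' (AffineMap.lineMap x y (0 : ℝ))).comp_hasDerivAt 0
      AffineMap.hasDerivAt_lineMap
  have hslope := hline.le_slope_of_hasDerivAt (Set.mem_univ 0) (Set.mem_univ 1) one_pos hderiv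
  simp only [slope_def_field, Function.comp_apply, AffineMap.lineMap_apply_one,
    AffineMap.lineMap_apply_zero, sub_zero, div_one] at hslope
  linarith

theorem convexOn_univ_sum {ι : Type*} (s : Finset ι) {f : ι → F → ℝ}
    (hf : ∀ i ∈ s, ConvexOn ℝ Set.univ (f i)) :
    ConvexOn ℝ Set.univ fun x => ∑ i ∈ s, f i x := by
  simpa only [← Finset.sum_apply] using
    Finset.sum_induction f (ConvexOn ℝ Set.univ) (fun _ _ => ConvexOn.add)
      (convexOn_const 0 convex_univ) hf

end FirstOrder

section InnerProduct

variable {E : Type*} [NormedAddCommGroup E] [InnerProductSpace ℝ E]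

theorem neg_half_mul_sq_norm_le_inner_add {η : ℝ} (hη : 0 < η) (g v : E) :
    -(η / 2 * ‖g‖ ^ 2) ≤ ⟪g, v⟫ + 1 / (2 * η) * ‖v‖ ^ 2 := by
  have hsquare : ⟪g, v⟫ + 1 / (2 * η) * ‖v‖ ^ 2 + η / 2 * ‖g‖ ^ 2
      = ‖v + η • g‖ ^ 2 / (2 * η) := by
    rw [norm_add_sq_real, real_inner_smul_right, norm_smul, Real.norm_of_nonneg hη.le,
      real_inner_comm]
    field_simp
    ring
  have : 0 ≤ ‖v + η • g‖ ^ 2 / (2 * η) := by positivity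
  linarith

theorem ConvexOn.add_sq_norm_sub_le_of_isMinOn {G : E → ℝ} (hG : ConvexOn ℝ Set.univ G)
    {x : E} (hGx : DifferentiableAt ℝ G x) {c : ℝ} {b : E}
    (hmin : IsMinOn (fun z => G z + c * ‖z - b‖ ^ 2) Set.univ x) (y : E) :
    G x + c * ‖x - b‖ ^ 2 + c * ‖y - x‖ ^ 2 ≤ G y + c * ‖y - b‖ ^ 2 := by
  have hstat := (hmin.isLocalMin Filter.univ_mem).hasFDerivAt_eq_zero
    (hGx.hasFDerivAt.add (((hasFDerivAt_id x).sub_const b).norm_sq.const_mul c))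
  have hstat_dir := congrArg (· (y - x)) hstat
  simp only [id_eq, ContinuousLinearMap.comp_id, add_apply, smul_apply, coe_innerSL_apply,
    nsmul_eq_mul, Nat.cast_ofNat, smul_eq_mul, zero_apply] at hstat_dir
  have htangent := hG.add_le_of_hasFDerivAt hGx.hasFDerivAt y
  have hexpand : ‖y - b‖ ^ 2 = ‖x - b‖ ^ 2 + 2 * ⟪x - b, y - x⟫ + ‖y - x‖ ^ 2 := by
    rw [← norm_add_sq_real, sub_add_sub_cancel']
  linear_combination htangent - c * hexpand - hstat_dir

variable [CompleteSpace E]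

theorem le_add_inner_gradient_add_sq_of_lipschitz_gradient {f : E → ℝ} {L : ℝ}
    (hf : Differentiable ℝ f) (hs : ∀ x y, ‖∇ f x - ∇ f y‖ ≤ L * ‖x - y‖) (x y : E) :
    f y ≤ f x + ⟪∇ f x, y - x⟫ + L / 2 * ‖y - x‖ ^ 2 := by
  set v := y - x
  have hφ (s : ℝ) : HasDerivAt (fun s : ℝ => f (x + s • v) - s * ⟪∇ f x, v⟫)
      (⟪∇ f (x + s • v), v⟫ - ⟪∇ f x, v⟫) s := by
    have hpath : HasDerivAt (fun s : ℝ => x + s • v) v s := by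
      simpa using ((hasDerivAt_id s).smul_const v).const_add x
    have hcomp : HasDerivAt (fun s : ℝ => f (x + s • v)) ⟪∇ f (x + s • v), v⟫ s :=
      (hf _).hasGradientAt.hasFDerivAt.comp_hasDerivAt s hpath
    exact hcomp.sub (hasDerivAt_mul_const _)
  have hB (s : ℝ) :
      HasDerivAt (fun s : ℝ => f x + L / 2 * ‖v‖ ^ 2 * s ^ 2) (L * ‖v‖ ^ 2 * s) s :=
    (((hasDerivAt_pow 2 s).const_mul (L / 2 * ‖v‖ ^ 2)).const_add (f x)).congr_deriv
      (by push_cast; ring)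
  have hbound (s : ℝ) (hs' : s ∈ Set.Ico (0 : ℝ) 1) :
      ⟪∇ f (x + s • v), v⟫ - ⟪∇ f x, v⟫ ≤ L * ‖v‖ ^ 2 * s :=
    calc ⟪∇ f (x + s • v), v⟫ - ⟪∇ f x, v⟫ = ⟪∇ f (x + s • v) - ∇ f x, v⟫ :=
          (inner_sub_left _ _ _).symm
      _ ≤ ‖∇ f (x + s • v) - ∇ f x‖ * ‖v‖ := real_inner_le_norm _ _
      _ ≤ L * ‖s • v‖ * ‖v‖ := by gcongr; simpa using hs (x + s • v) x
      _ = L * ‖v‖ ^ 2 * s := by rw [norm_smul, Real.norm_of_nonneg hs'.1]; ring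
  have hend := image_le_of_deriv_right_le_deriv_boundary
    (fun s _ => (hφ s).continuousAt.continuousWithinAt) (fun s _ => (hφ s).hasDerivWithinAt)
    (by simp) (fun s _ => (hB s).continuousAt.continuousWithinAt)
    (fun s _ => (hB s).hasDerivWithinAt) hbound (Set.right_mem_Icc.2 zero_le_one)
  simp only [one_smul, one_mul, one_pow, mul_one, v, add_sub_cancel] at hend
  linarith

theorem sq_norm_gradient_le_of_lipschitz_gradient {f : E → ℝ} {L : ℝ} (hL : 0 < L)
    (hf : Differentiable ℝ f) (hs : ∀ x y, ‖∇ f x - ∇ f y‖ ≤ L * ‖x - y‖) {m : E}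
    (hm : IsMinOn f Set.univ m) (x : E) :
    ‖∇ f x‖ ^ 2 ≤ 2 * L * (f x - f m) := by
  have hdescent :=
    le_add_inner_gradient_add_sq_of_lipschitz_gradient hf hs x (x - L⁻¹ • ∇ f x)
  have hmin : f m ≤ f (x - L⁻¹ • ∇ f x) := hm (Set.mem_univ _)
  rw [sub_sub_cancel_left, inner_neg_right, norm_neg, real_inner_smul_right,
    real_inner_self_eq_norm_sq, norm_smul, Real.norm_of_nonneg (inv_nonneg.2 hL.le)] at hdescent
  have hquad : L / 2 * (L⁻¹ * ‖∇ f x‖) ^ 2 = L⁻¹ * ‖∇ f x‖ ^ 2 / 2 := by field_simp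
  have hdecrease : L⁻¹ * ‖∇ f x‖ ^ 2 ≤ 2 * (f x - f m) := by linarith
  calc ‖∇ f x‖ ^ 2 = L * (L⁻¹ * ‖∇ f x‖ ^ 2) := by field_simp
    _ ≤ L * (2 * (f x - f m)) := by gcongr
    _ = 2 * L * (f x - f m) := by ring

end InnerProduct

section FTRL

variable {E : Type*} [NormedAddCommGroup E] {l : ℕ → E → ℝ} {η : ℝ} {b : E}

/-- The paper's `F_{n+1}`: it sums the first `n` losses, and FTRL's `w (n + 1)` minimizes it. -/
noncomputable def ftrlObjective (l : ℕ → E → ℝ) (η : ℝ) (b : E) (n : ℕ) (x : E) : ℝ :=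
  ∑ i ∈ Icc 1 n, l i x + 1 / (2 * η) * ‖x - b‖ ^ 2

theorem ftrlObjective_succ (n : ℕ) (x : E) :
    ftrlObjective l η b (n + 1) x = ftrlObjective l η b n x + l (n + 1) x := by
  simp only [ftrlObjective, sum_Icc_succ_top (Nat.le_add_left 1 n)]
  ring

theorem isMinOn_ftrlObjective_zero (hη : 0 ≤ η) :
    IsMinOn (ftrlObjective l η b 0) Set.univ b := fun x _ => by
  have : 0 ≤ 1 / (2 * η) * ‖x - b‖ ^ 2 := by positivity
  simpa [ftrlObjective] using this

variable [InnerProductSpace ℝ E] [CompleteSpace E]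

theorem ftrlObjective_add_le (hη : 0 < η) {n : ℕ}
    (hl : ∀ i ∈ Icc 1 (n + 1), Differentiable ℝ (l i))
    (hconv : ∀ i ∈ Icc 1 (n + 1), ConvexOn ℝ Set.univ (l i)) {x : E}
    (hx : IsMinOn (ftrlObjective l η b n) Set.univ x) (y : E) :
    ftrlObjective l η b n x + l (n + 1) x
      ≤ ftrlObjective l η b (n + 1) y + η / 2 * ‖∇ (l (n + 1)) x‖ ^ 2 := by
  have hsub : Icc 1 n ⊆ Icc 1 (n + 1) := Icc_subset_Icc_right n.le_succ
  have hlast : n + 1 ∈ Icc 1 (n + 1) := right_mem_Icc.2 (Nat.le_add_left 1 n)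
  have hgrowth :=
    (convexOn_univ_sum _ fun i hi => hconv i (hsub hi)).add_sq_norm_sub_le_of_isMinOn
      (DifferentiableAt.fun_sum fun i hi => hl i (hsub hi) x) hx y
  have htangent :=
    (hconv _ hlast).add_le_of_hasFDerivAt (hl _ hlast x).hasGradientAt.hasFDerivAt y
  have hsquare := neg_half_mul_sq_norm_le_inner_add hη (∇ (l (n + 1)) x) (y - x)
  rw [ftrlObjective_succ]
  simp only [ftrlObjective, InnerProductSpace.toDual_apply_apply] at *
  linarith

theorem sum_sub_le_ftrlObjective (hη : 0 < η) {w : ℕ → E} {T : ℕ}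
    (hl : ∀ t ∈ Icc 1 T, Differentiable ℝ (l t))
    (hconv : ∀ t ∈ Icc 1 T, ConvexOn ℝ Set.univ (l t))
    (hmin : ∀ t ∈ Icc 1 T, IsMinOn (ftrlObjective l η b (t - 1)) Set.univ (w t)) (y : E) :
    ∑ t ∈ Icc 1 T, (l t (w t) - η / 2 * ‖∇ (l t) (w t)‖ ^ 2) ≤ ftrlObjective l η b T y := by
  induction T generalizing y with
  | zero =>
    simp only [ftrlObjective, Icc_eq_empty_of_lt zero_lt_one, sum_empty, zero_add]
    positivity
  | succ n ih =>
    have hsub : Icc 1 n ⊆ Icc 1 (n + 1) := Icc_subset_Icc_right n.le_succ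
    have hprev := ih (fun t ht => hl t (hsub ht)) (fun t ht => hconv t (hsub ht))
      (fun t ht => hmin t (hsub ht)) (w (n + 1))
    have hstep := ftrlObjective_add_le hη hl hconv
      (by simpa using hmin (n + 1) (right_mem_Icc.2 (Nat.le_add_left 1 n))) y
    rw [sum_Icc_succ_top (Nat.le_add_left 1 n)]
    linarith

theorem ftrl_regret_le (hη : 0 < η) {w : ℕ → E} {T : ℕ}
    (hl : ∀ t ∈ Icc 1 T, Differentiable ℝ (l t))
    (hconv : ∀ t ∈ Icc 1 T, ConvexOn ℝ Set.univ (l t))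
    (hmin : ∀ t ∈ Icc 1 T, IsMinOn (ftrlObjective l η b (t - 1)) Set.univ (w t)) (u : E) :
    ∑ t ∈ Icc 1 T, (l t (w t) - l t u)
      ≤ ‖u - b‖ ^ 2 / (2 * η) + η / 2 * ∑ t ∈ Icc 1 T, ‖∇ (l t) (w t)‖ ^ 2 := by
  have hsum := sum_sub_le_ftrlObjective hη hl hconv hmin u
  rw [ftrlObjective, sum_sub_distrib, ← mul_sum, one_div_mul_eq_div] at hsum
  rw [sum_sub_distrib]
  linarith

end FTRL

theorem regret_le_of_self_bounding {R S D L η : ℝ} (hL : 0 < L) (hS : 0 < S)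
    (hη : η = min (1 / √S) (1 / (2 * L))) (hR : R ≤ D ^ 2 / (2 * η) + η * L * (R + S)) :
    R ≤ 2 * D ^ 2 * L + (D ^ 2 + 2 * L) * √S := by
  have hE : 0 < √S := Real.sqrt_pos.2 hS
  have hηL : η * L ≤ 1 / 2 := by
    have : η ≤ 1 / (2 * L) := hη ▸ min_le_right _ _
    rw [le_div_iff₀ (by positivity)] at this
    linarith
  have hηS : η * S ≤ √S := by
    have : η ≤ 1 / √S := hη ▸ min_le_left _ _
    rw [le_div_iff₀ hE] at this
    calc η * S = η * √S * √S := by rw [mul_assoc, Real.mul_self_sqrt hS.le]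
      _ ≤ 1 * √S := by gcongr
      _ = √S := one_mul _
  have hinv : 1 / η ≤ √S + 2 * L := by
    rcases min_choice (1 / √S) (1 / (2 * L)) with h | h <;>
      rw [hη, h, one_div_one_div] <;> linarith
  rcases le_or_gt R 0 with hR0 | hR0
  · have : 0 ≤ 2 * D ^ 2 * L + (D ^ 2 + 2 * L) * √S := by positivity
    linarith
  · have hηLR : η * L * R ≤ 1 / 2 * R := mul_le_mul_of_nonneg_right hηL hR0.le
    have hηLS : L * (η * S) ≤ L * √S := mul_le_mul_of_nonneg_left hηS hL.le
    have hD : D ^ 2 * (1 / η) ≤ D ^ 2 * (√S + 2 * L) :=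
      mul_le_mul_of_nonneg_left hinv (sq_nonneg D)
    have : D ^ 2 / (2 * η) = D ^ 2 * (1 / η) / 2 := by ring
    linarith

/-- FTRL with constant regularization achieves constant regret plus a misspecification term
for smooth convex losses (Theorem: FTRL - Smooth + Convex). -/
theorem ftrl_regret_smooth_convex {E : Type*} [NormedAddCommGroup E] [InnerProductSpace ℝ E]
    [CompleteSpace E] (T : ℕ) (L : ℝ) (hL : 0 < L) (l : ℕ → E → ℝ)
    (w wopt : ℕ → E) (wstar : E) (W : Set E) (D : ℝ) (η : ℝ)
    (hl : ∀ t ∈ Finset.Icc 1 T, Differentiable ℝ (l t))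
    (hconv : ∀ t ∈ Finset.Icc 1 T, ConvexOn ℝ Set.univ (l t))
    (hsmooth : ∀ t ∈ Finset.Icc 1 T, ∀ x y : E, ‖∇ (l t) x - ∇ (l t) y‖ ≤ L * ‖x - y‖)
    (hopt : ∀ t ∈ Finset.Icc 1 T, ∀ x, l t (wopt t) ≤ l t x)
    (hEpos : 0 < Real.sqrt (∑ t ∈ Finset.Icc 1 T, (l t wstar - l t (wopt t))))
    (hη : η = min (1 / Real.sqrt (∑ t ∈ Finset.Icc 1 T, (l t wstar - l t (wopt t))))
      (1 / (2 * L)))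
    (hupdate : ∀ t ∈ Finset.Icc 2 (T + 1),
      (∀ x, (∑ i ∈ Finset.Icc 1 (t - 1), l i (w t)) + 1 / (2 * η) * ‖w t - w 1‖ ^ 2
          ≤ (∑ i ∈ Finset.Icc 1 (t - 1), l i x) + 1 / (2 * η) * ‖x - w 1‖ ^ 2)
        ∧ ∇ (fun x => (∑ i ∈ Finset.Icc 1 (t - 1), l i x)
            + 1 / (2 * η) * ‖x - w 1‖ ^ 2) (w t) = 0)
    (hW : ∀ t ∈ Finset.Icc 1 T, w t ∈ W) (hWs : wstar ∈ W)
    (hD : ∀ u ∈ W, ∀ v ∈ W, ‖u - v‖ ≤ D) :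
    ∑ t ∈ Finset.Icc 1 T, (l t (w t) - l t wstar)
      ≤ 2 * D ^ 2 * L
        + (D ^ 2 + 2 * L) * Real.sqrt (∑ t ∈ Finset.Icc 1 T, (l t wstar - l t (wopt t))) := by
  have hS := Real.sqrt_pos.1 hEpos
  have hηpos : 0 < η := hη ▸ lt_min (by positivity) (by positivity)
  have hT : 1 ∈ Icc 1 T := by
    obtain ⟨t, ht, -⟩ := exists_ne_zero_of_sum_ne_zero hS.ne'
    exact mem_Icc.2 ⟨le_rfl, (mem_Icc.1 ht).1.trans (mem_Icc.1 ht).2⟩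
  have hmin (t : ℕ) (ht : t ∈ Icc 1 T) :
      IsMinOn (ftrlObjective l η (w 1) (t - 1)) Set.univ (w t) := by
    rcases (mem_Icc.1 ht).1.eq_or_lt with rfl | h2
    · exact isMinOn_ftrlObjective_zero hηpos.le
    · exact fun x _ => (hupdate t (mem_Icc.2 ⟨h2, (mem_Icc.1 ht).2.trans T.le_succ⟩)).1 x
  have hgrad : ∑ t ∈ Icc 1 T, ‖∇ (l t) (w t)‖ ^ 2
      ≤ 2 * L * ∑ t ∈ Icc 1 T, (l t (w t) - l t (wopt t)) := by
    rw [mul_sum]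
    exact sum_le_sum fun t ht => sq_norm_gradient_le_of_lipschitz_gradient hL (hl t ht)
      (hsmooth t ht) (fun x _ => hopt t ht x) (w t)
  have hdiam : ‖wstar - w 1‖ ^ 2 ≤ D ^ 2 :=
    pow_le_pow_left₀ (norm_nonneg _) (hD _ hWs _ (hW 1 hT)) 2
  have hsplit : ∑ t ∈ Icc 1 T, (l t (w t) - l t (wopt t))
      = ∑ t ∈ Icc 1 T, (l t (w t) - l t wstar) + ∑ t ∈ Icc 1 T, (l t wstar - l t (wopt t)) := by
    rw [← sum_add_distrib]
    exact sum_congr rfl fun t _ => by ring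
  refine regret_le_of_self_bounding hL hS hη ?_
  calc _ ≤ ‖wstar - w 1‖ ^ 2 / (2 * η) + η / 2 * ∑ t ∈ Icc 1 T, ‖∇ (l t) (w t)‖ ^ 2 :=
        ftrl_regret_le hηpos hl hconv hmin wstar
    _ ≤ D ^ 2 / (2 * η) + η / 2 * (2 * L * ∑ t ∈ Icc 1 T, (l t (w t) - l t (wopt t))) := by
        gcongr
    _ = _ := by rw [hsplit]; ring
end
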